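/- arXiv:1210.7677 — 2 statements merged into one kernel-verified Lean document; each statement's English description precedes it below -/
import Mathlib

section
/- Let H be an n×n Hermitian matrix and let v be a unit vector such that Hv = λv + εw for some λ ∈ ℝ, ε > 0, and a unit vector w orthogonal to v. Suppose H has exactly one eigenvalue λ_ε (counted with multiplicity) in the closed ball of center λ and radius ε, and all other eigenvalues of H are at distance at least d from λ, where d > ε. Then any unit eigenvector v_ε of H associated to λ_ε satisfies ‖v_ε − P_v(v_ε)‖ ≤ 2ε/(d−ε), where P_v is the orthogonal projection onto the線 span of v. -/
/-!
Let `u` be an orthonormal eigenbasis of `H` with eigenvalues `μ`. The coefficients of the residual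
`H v - λ v = ε w` are `(μ i - λ) ⟪u i, v⟫`, so Parseval and the gap give
`d² ∑_{i ≠ i₀} |⟪u i, v⟫|² ≤ ε²`. As `λ_ε` is a simple eigenvalue, `v_ε` is a unimodular multiple
of `u i₀`, hence `‖v_ε - P_v v_ε‖² = 1 - |⟪u i₀, v⟫|² = ∑_{i ≠ i₀} |⟪u i, v⟫|²`. This gives even
`‖v_ε - P_v v_ε‖ ≤ ε / d`.
-/

open Matrix Finset

section InnerProductSpace

variable {𝕜 E : Type*} [RCLike 𝕜] [NormedAddCommGroup E] [InnerProductSpace 𝕜 E]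

theorem norm_sub_inner_smul_sq {y : E} (hy : ‖y‖ = 1) (x : E) :
    ‖x - inner 𝕜 y x • y‖ ^ 2 = ‖x‖ ^ 2 - ‖inner 𝕜 y x‖ ^ 2 := by
  rw [@norm_sub_sq 𝕜, inner_smul_right, ← inner_conj_symm, RCLike.conj_mul, norm_smul, hy,
    RCLike.norm_conj]
  norm_cast
  ring

theorem norm_sub_inner_smul_comm {x y : E} (hx : ‖x‖ = 1) (hy : ‖y‖ = 1) :
    ‖x - inner 𝕜 y x • y‖ = ‖y - inner 𝕜 x y • x‖ := by
  rw [← sq_eq_sq₀ (norm_nonneg _) (norm_nonneg _), norm_sub_inner_smul_sq hy,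
    norm_sub_inner_smul_sq hx, hx, hy, ← inner_conj_symm, RCLike.norm_conj]

theorem norm_smul_sub_inner_smul (c : 𝕜) (x y : E) :
    ‖c • x - inner 𝕜 y (c • x) • y‖ = ‖c‖ * ‖x - inner 𝕜 y x • y‖ := by
  rw [inner_smul_right, mul_smul, ← smul_sub, norm_smul]

theorem OrthonormalBasis.norm_sub_inner_smul_sq {ι : Type*} [Fintype ι] [DecidableEq ι]
    (u : OrthonormalBasis ι 𝕜 E) (i₀ : ι) (x : E) :
    ‖x - inner 𝕜 (u i₀) x • u i₀‖ ^ 2 = ∑ i ∈ univ.erase i₀, ‖inner 𝕜 (u i) x‖ ^ 2 := by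
  rw [_root_.norm_sub_inner_smul_sq (u.orthonormal.1 i₀), ← u.sum_sq_norm_inner_right,
    ← sum_erase_add _ _ (mem_univ i₀), add_sub_cancel_right]

namespace LinearMap.IsSymmetric

variable {T : E →ₗ[𝕜] E} (hT : T.IsSymmetric)
include hT

theorem inner_apply_of_apply_eq_smul {y : E} {μ : ℝ} (hy : T y = (μ : 𝕜) • y) (x : E) :
    inner 𝕜 y (T x) = μ * inner 𝕜 y x := by
  rw [← hT, hy, inner_smul_left, RCLike.conj_ofReal]

variable {ι : Type*} [Fintype ι] {u : OrthonormalBasis ι 𝕜 E} {μ : ι → ℝ}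
  (hu : ∀ i, T (u i) = (μ i : 𝕜) • u i)
include hu

theorem sum_sq_mul_norm_inner_eq (lam : ℝ) (x : E) :
    ∑ i, (μ i - lam) ^ 2 * ‖inner 𝕜 (u i) x‖ ^ 2 = ‖T x - (lam : 𝕜) • x‖ ^ 2 := by
  rw [← u.sum_sq_norm_inner_right]
  refine sum_congr rfl fun i _ => ?_
  rw [inner_sub_right, inner_smul_right, hT.inner_apply_of_apply_eq_smul (hu i), ← sub_mul,
    norm_mul, mul_pow, ← RCLike.ofReal_sub, RCLike.norm_ofReal, sq_abs]

theorem sq_mul_sum_erase_norm_inner_le [DecidableEq ι] {lam d : ℝ} (hd : 0 ≤ d) {i₀ : ι}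
    (hgap : ∀ i ≠ i₀, d ≤ |μ i - lam|) (x : E) :
    d ^ 2 * ∑ i ∈ univ.erase i₀, ‖inner 𝕜 (u i) x‖ ^ 2 ≤ ‖T x - (lam : 𝕜) • x‖ ^ 2 := by
  rw [← hT.sum_sq_mul_norm_inner_eq hu, mul_sum]
  refine (sum_le_sum fun i hi => ?_).trans
    (sum_le_sum_of_subset_of_nonneg (subset_univ _) fun i _ _ => by positivity)
  rw [← sq_abs (μ i - lam)]
  gcongr
  exact hgap i (ne_of_mem_erase hi)

theorem eq_inner_smul_of_apply_eq_smul {i₀ : ι} (hsimple : ∀ i ≠ i₀, μ i ≠ μ i₀) {y : E}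
    (hy : T y = (μ i₀ : 𝕜) • y) : y = inner 𝕜 (u i₀) y • u i₀ := by
  classical
  have horth : ∀ i ≠ i₀, inner 𝕜 (u i) y = 0 := fun i hi => by
    have h := hT.inner_apply_of_apply_eq_smul (hu i) y
    rw [hy, inner_smul_right, ← sub_eq_zero, ← sub_mul] at h
    exact (mul_eq_zero.1 h).resolve_left (sub_ne_zero.2 (by exact_mod_cast (hsimple i hi).symm))
  conv_lhs => rw [← u.sum_repr' y]
  exact sum_eq_single_of_mem i₀ (mem_univ _) fun i _ hi => by rw [horth i hi, zero_smul]

end LinearMap.IsSymmetric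

end InnerProductSpace

theorem Matrix.IsHermitian.toEuclideanLin_eigenvectorBasis {𝕜 ι : Type*} [RCLike 𝕜] [Fintype ι]
    [DecidableEq ι] {A : Matrix ι ι 𝕜} (hA : A.IsHermitian) (i : ι) :
    toEuclideanLin A (hA.eigenvectorBasis i) = (hA.eigenvalues i : 𝕜) • hA.eigenvectorBasis i := by
  rw [toLpLin_apply, hA.mulVec_eigenvectorBasis, RCLike.real_smul_eq_coe_smul (K := 𝕜)]
  rfl

theorem eigenvector_perturbation_bound_general
    {n : ℕ} (H : Matrix (Fin n) (Fin n) ℂ) (hH : H.IsHermitian)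
    (lam ε d : ℝ) (hε : 0 < ε) (hd : ε < d)
    (v w : EuclideanSpace ℂ (Fin n)) (hv : ‖v‖ = 1) (hw : ‖w‖ = 1)
    (h : H.mulVec v = (lam : ℂ) • v + (ε : ℂ) • w)
    (i₀ : Fin n)
    (h_in : |hH.eigenvalues i₀ - lam| ≤ ε)
    (h_out : ∀ i : Fin n, i ≠ i₀ → d ≤ |hH.eigenvalues i - lam|)
    (vε : EuclideanSpace ℂ (Fin n)) (hvε : ‖vε‖ = 1)
    (heig : H.mulVec vε = (hH.eigenvalues i₀ : ℂ) • vε) :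
    ‖vε - (inner (𝕜 := ℂ) v vε) • v‖ ≤ 2 * ε / (d - ε) := by
  have hd₀ : 0 < d := hε.trans hd
  have hT : (toEuclideanLin H).IsSymmetric := isSymmetric_toEuclideanLin_iff.2 hH
  have hu := hH.toEuclideanLin_eigenvectorBasis
  have hu₀ := hH.eigenvectorBasis.orthonormal.1 i₀
  have hres : toEuclideanLin H v - (lam : ℂ) • v = (ε : ℂ) • w := by
    rw [toLpLin_apply, h, sub_eq_iff_eq_add']
    rfl
  have hsimple : ∀ i ≠ i₀, hH.eigenvalues i ≠ hH.eigenvalues i₀ := fun i hi heq => by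
    have := h_out i hi
    rw [heq] at this
    linarith
  have hvε_eq := hT.eq_inner_smul_of_apply_eq_smul hu hsimple (by rw [toLpLin_apply, heig]; rfl)
  have hc : ‖inner ℂ (hH.eigenvectorBasis i₀) vε‖ = 1 := by
    simpa [hvε, norm_smul, hu₀] using (congrArg norm hvε_eq).symm
  have hmain : (d * ‖vε - inner ℂ v vε • v‖) ^ 2 ≤ ε ^ 2 :=
    calc (d * ‖vε - inner ℂ v vε • v‖) ^ 2
        = d ^ 2 * ∑ i ∈ univ.erase i₀, ‖inner ℂ (hH.eigenvectorBasis i) v‖ ^ 2 := by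
          rw [mul_pow, hvε_eq, norm_smul_sub_inner_smul, hc, one_mul,
            norm_sub_inner_smul_comm hu₀ hv, hH.eigenvectorBasis.norm_sub_inner_smul_sq]
      _ ≤ ‖toEuclideanLin H v - (lam : ℂ) • v‖ ^ 2 :=
          hT.sq_mul_sum_erase_norm_inner_le hu hd₀.le h_out v
      _ = ε ^ 2 := by
          rw [hres, norm_smul, hw, mul_one, Complex.norm_real, Real.norm_of_nonneg hε.le]
  have hdε : d * ‖vε - inner ℂ v vε • v‖ ≤ ε :=
    (pow_le_pow_iff_left₀ (by positivity) hε.le two_ne_zero).1 hmain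
  calc ‖vε - inner ℂ v vε • v‖ ≤ ε / d := by rwa [le_div_iff₀ hd₀, mul_comm]
    _ ≤ 2 * ε / (d - ε) := by
      rw [div_le_div_iff₀ hd₀ (sub_pos.2 hd)]
      nlinarith

/-- **Eigenvectors under perturbation.** Let `H` be an `n × n` Hermitian matrix and `v` a unit
vector with `H v = λ v + ε w` for some `λ ∈ ℝ`, `ε > 0` and a unit vector `w ⟂ v`. Suppose
that `H` has exactly one eigenvalue `λ_ε` (counted with multiplicity, here `λ_ε` is the
eigenvalue of index `i₀` in an enumeration with multiplicity of the eigenvalues) in the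
closed ball of center `λ` and radius `ε`, and that all other eigenvalues are at distance at
least `d > ε` from `λ`. Then any unit eigenvector `v_ε` of `H` associated to `λ_ε` satisfies
`‖v_ε - P_v(v_ε)‖ ≤ 2ε/(d-ε)`, where `P_v x = ⟪v, x⟫ v` is the orthogonal projection onto
the span of `v`. -/
theorem eigenvector_perturbation_bound
    {n : ℕ} (H : Matrix (Fin n) (Fin n) ℂ) (hH : H.IsHermitian)
    (lam ε d : ℝ) (hε : 0 < ε) (hd : ε < d)
    (v w : EuclideanSpace ℂ (Fin n)) (hv : ‖v‖ = 1) (hw : ‖w‖ = 1)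
    (hvw : inner (𝕜 := ℂ) v w = 0)
    (h : H.mulVec v = (lam : ℂ) • v + (ε : ℂ) • w)
    (i₀ : Fin n)
    (h_in : |hH.eigenvalues i₀ - lam| ≤ ε)
    (h_out : ∀ i : Fin n, i ≠ i₀ → d ≤ |hH.eigenvalues i - lam|)
    (vε : EuclideanSpace ℂ (Fin n)) (hvε : ‖vε‖ = 1)
    (heig : H.mulVec vε = (hH.eigenvalues i₀ : ℂ) • vε) :
    ‖vε - (inner (𝕜 := ℂ) v vε) • v‖ ≤ 2 * ε / (d - ε) :=
  eigenvector_perturbation_bound_general H hH lam ε d hε hd v w hv hw h i₀ h_in h_out vε hvε heig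
end

section
/- Let A be a nonnegative random variable such that for all x ≥ 0, P(A ≥ x) = ℓ(x) x^{−α}, where ℓ is a slowly varying function and α > 0. Then there exists a slowly varying function L₀ such that for every positive integer k and every x ≥ 0: E[A^k 1_{A ≤ x}] ≤ L₀(x) if k ≤ α, and E[A^k 1_{A ≤ x}] ≤ L₀(x) · (k/(k−α)) · x^{k−α} if k > α. -/
/-!
Write `T x = P(A ≥ x) = ℓ x * x ^ (-α)`, `G x = sup_{0 < s ≤ x} ℓ s` and
`M x = E[A ^ α; A ≤ x]`, and take `L₀ = G + M + 1`. For `k ≤ α` one has `A ^ k ≤ 1 + A ^ α`.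
For `k > α` the layer-cake formula gives
`E[A ^ k; A ≤ x] = ∫₀^{x ^ k} P(t ≤ A ^ k 1_{A ≤ x}) dt ≤ G x ∫₀^{x ^ k} t ^ (-α / k) dt`,
which is `G x * k / (k - α) * x ^ (k - α)`.

`G` is slowly varying because monotonicity of `T` gives `ℓ s ≤ c ^ α ℓ y` for `y ≤ s ≤ c y`, so
slow variation of `ℓ` at finitely many points of a geometric grid controls `ℓ` on all of `[x, t x]`.
`M` is slowly varying because `M (t x) ≤ M x + t ^ α ℓ x`, while summing the contributions of
the blocks `(4 ^ (-i-1) x, 4 ^ (-i) x]`, each asymptotic to `(2 ^ (-α) - 4 ^ (-α)) ℓ x`,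
shows `ℓ = o(M)`.
-/

open MeasureTheory Filter

noncomputable section

/-- A function `L : ℝ → ℝ` is *slowly varying* (at `+∞`) if for every `t > 0`,
`L (t x) / L x → 1` as `x → +∞`. -/
def SlowlyVarying (L : ℝ → ℝ) : Prop :=
  ∀ t : ℝ, 0 < t → Tendsto (fun x => L (t * x) / L x) atTop (nhds 1)

open Set Topology Asymptotics

namespace SlowlyVarying

variable {L : ℝ → ℝ}

theorem eventually_ne_zero (hL : SlowlyVarying L) : ∀ᶠ x in atTop, L x ≠ 0 := by
  have h := hL 1 one_pos
  simp only [one_mul] at h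
  filter_upwards [h.eventually_ne one_ne_zero] with x hx h0
  simp [h0] at hx

theorem of_one_le (h : ∀ t, 1 ≤ t → Tendsto (fun x => L (t * x) / L x) atTop (𝓝 1)) :
    SlowlyVarying L := by
  intro t ht
  rcases le_or_gt 1 t with h1t | h1t
  · exact h t h1t
  have hinv := ((h t⁻¹ (one_le_inv₀ ht |>.mpr h1t.le)).comp
    (tendsto_id.const_mul_atTop ht)).inv₀ one_ne_zero
  simpa [Function.comp_def, ← mul_assoc, inv_mul_cancel₀ ht.ne', inv_div] using hinv

theorem of_monotone (hmono : Monotone L) (hpos : ∀ᶠ x in atTop, 0 < L x)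
    (hbound : ∀ t, 1 ≤ t → ∀ ε, 0 < ε → ∀ᶠ x in atTop, L (t * x) ≤ (1 + ε) * L x) :
    SlowlyVarying L := by
  refine of_one_le fun t ht => Metric.tendsto_nhds.2 fun ε hε => ?_
  filter_upwards [hbound t ht (ε / 2) (half_pos hε), hpos, eventually_ge_atTop 0]
    with x hx hLx hx0
  have hlow : 1 ≤ L (t * x) / L x :=
    (one_le_div hLx).2 (hmono (le_mul_of_one_le_left hx0 ht))
  have hup : L (t * x) / L x ≤ 1 + ε / 2 := (div_le_iff₀ hLx).2 hx
  rw [Real.dist_eq, abs_lt]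
  constructor <;> linarith

end SlowlyVarying

def runningSup (ℓ : ℝ → ℝ) (x : ℝ) : ℝ := sSup (ℓ '' Ioc 0 x)

section RunningSup

variable {ℓ : ℝ → ℝ} {α : ℝ}

theorem le_runningSup {x s : ℝ} (hbdd : BddAbove (ℓ '' Ioc 0 x)) (hs : s ∈ Ioc 0 x) :
    ℓ s ≤ runningSup ℓ x :=
  le_csSup hbdd (mem_image_of_mem ℓ hs)

theorem runningSup_nonneg (hℓ0 : ∀ s, 0 < s → 0 ≤ ℓ s) (x : ℝ) : 0 ≤ runningSup ℓ x :=
  Real.sSup_nonneg (by rintro _ ⟨s, hs, rfl⟩; exact hℓ0 s hs.1)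

theorem runningSup_mono (hbdd : ∀ x, BddAbove (ℓ '' Ioc 0 x)) (hℓ0 : ∀ s, 0 < s → 0 ≤ ℓ s) :
    Monotone (runningSup ℓ) := by
  intro x y hxy
  rcases le_or_gt x 0 with hx | hx
  · rw [runningSup, Ioc_eq_empty hx.not_gt, image_empty, Real.sSup_empty]
    exact runningSup_nonneg hℓ0 y
  · exact csSup_le_csSup (hbdd y) ⟨ℓ x, x, ⟨hx, le_rfl⟩, rfl⟩
      (image_mono (Ioc_subset_Ioc_right hxy))

theorem le_rpow_mul_of_grid_le
    (hloc : ∀ c y s, 0 < y → y ≤ s → s ≤ c * y → ℓ s ≤ c ^ α * ℓ y)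
    {r x K : ℝ} (hr : 1 ≤ r) (hx : 0 < x) :
    ∀ n : ℕ, (∀ j ≤ n, ℓ (r ^ j * x) ≤ K) → ∀ s ∈ Icc x (r ^ (n + 1) * x), ℓ s ≤ r ^ α * K := by
  have hrα : 0 ≤ r ^ α := Real.rpow_nonneg (zero_le_one.trans hr) α
  intro n
  induction n with
  | zero =>
    intro hK s hs
    have h0 := hK 0 le_rfl
    rw [pow_zero, one_mul] at h0
    exact (hloc r x s hx hs.1 (by simpa using hs.2)).trans (mul_le_mul_of_nonneg_left h0 hrα)
  | succ n ih =>
    intro hK s hs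
    rcases le_or_gt s (r ^ (n + 1) * x) with hsn | hsn
    · exact ih (fun j hj => hK j (by omega)) s ⟨hs.1, hsn⟩
    · have hy : 0 < r ^ (n + 1) * x := by positivity
      refine (hloc r _ s hy hsn.le (by rw [← mul_assoc, ← pow_succ']; exact hs.2)).trans ?_
      exact mul_le_mul_of_nonneg_left (hK (n + 1) le_rfl) hrα

theorem runningSup_le_one_add_mul (hℓ : SlowlyVarying ℓ) (hpos : ∀ᶠ x in atTop, 0 < ℓ x)
    (hbdd : ∀ x, BddAbove (ℓ '' Ioc 0 x)) (hα : 0 < α)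
    (hloc : ∀ c y s, 0 < y → y ≤ s → s ≤ c * y → ℓ s ≤ c ^ α * ℓ y)
    (t : ℝ) {ε : ℝ} (hε : 0 < ε) :
    ∀ᶠ x in atTop, runningSup ℓ (t * x) ≤ (1 + ε) * runningSup ℓ x := by
  -- Split the factor `1 + ε` as `u * u`: one `u` bounds `ℓ` along a geometric grid of ratio
  -- `r = u ^ (1 / α)` by slow variation, the other bounds `ℓ` between consecutive grid points.
  set u := Real.sqrt (1 + ε)
  have hu : 1 < u := by rw [Real.lt_sqrt zero_le_one]; linarith
  have huu : u * u = 1 + ε := Real.mul_self_sqrt (by linarith)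
  set r := u ^ α⁻¹
  have hr : 1 < r := Real.one_lt_rpow hu (inv_pos.2 hα)
  have hrα : r ^ α = u := by
    rw [← Real.rpow_mul (by linarith), inv_mul_cancel₀ hα.ne', Real.rpow_one]
  obtain ⟨n, hn⟩ := pow_unbounded_of_one_lt t hr
  have hgrid : ∀ᶠ x in atTop, ∀ j ∈ Finset.Iic n, ℓ (r ^ j * x) ≤ u * ℓ x := by
    refine (eventually_all_finset _).2 fun j _ => ?_
    filter_upwards [(hℓ (r ^ j) (by positivity)).eventually_lt_const hu, hpos] with x hx hℓx
    exact ((div_lt_iff₀ hℓx).1 hx).le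
  filter_upwards [hgrid, hpos, eventually_gt_atTop 0] with x hgrid hℓx hx
  have hGx : ℓ x ≤ runningSup ℓ x := le_runningSup (hbdd x) ⟨hx, le_rfl⟩
  refine Real.sSup_le ?_ (by nlinarith)
  rintro _ ⟨s, hs, rfl⟩
  rcases le_or_gt s x with hsx | hxs
  · nlinarith [le_runningSup (hbdd x) ⟨hs.1, hsx⟩]
  · have hsr : s ≤ r ^ (n + 1) * x := by
      calc s ≤ t * x := hs.2
        _ ≤ r ^ (n + 1) * x := by
          gcongr
          exact hn.le.trans (pow_le_pow_right₀ hr.le n.le_succ)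
    have hs_le := le_rpow_mul_of_grid_le hloc hr.le hx n
      (fun j hj => hgrid j (Finset.mem_Iic.2 hj)) s ⟨hxs.le, hsr⟩
    rw [hrα, ← mul_assoc, huu] at hs_le
    nlinarith

end RunningSup

def tail {Ω : Type*} [MeasurableSpace Ω] (P : Measure Ω) (A : Ω → ℝ) (x : ℝ) : ℝ :=
  P.real {ω | x ≤ A ω}

def truncMoment {Ω : Type*} [MeasurableSpace Ω] (P : Measure Ω) (A : Ω → ℝ) (p x : ℝ) : ℝ :=
  ∫ ω, (if A ω ≤ x then A ω ^ p else 0) ∂P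

section HeavyTail

variable {Ω : Type*} [MeasurableSpace Ω] {P : Measure Ω} {A : Ω → ℝ} {α : ℝ} {ℓ : ℝ → ℝ}

theorem tail_nonneg (x : ℝ) : 0 ≤ tail P A x := measureReal_nonneg

theorem tail_antitone [IsFiniteMeasure P] : Antitone (tail P A) :=
  fun _ _ hab => measureReal_mono fun _ hω => hab.trans hω

theorem integral_indicator_tail (hA : Measurable A) (c x : ℝ) :
    ∫ ω, {ω | x ≤ A ω}.indicator (fun _ => c) ω ∂P = c * tail P A x := by
  rw [integral_indicator_const c (measurableSet_le measurable_const hA), smul_eq_mul, mul_comm]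
  rfl

theorem eq_rpow_mul_tail (htail : ∀ x, 0 < x → tail P A x = ℓ x * x ^ (-α)) {s : ℝ}
    (hs : 0 < s) : ℓ s = s ^ α * tail P A s := by
  rw [htail s hs, mul_left_comm, ← Real.rpow_add hs, add_neg_cancel, Real.rpow_zero, mul_one]

theorem rpow_mul_tail_mul (htail : ∀ x, 0 < x → tail P A x = ℓ x * x ^ (-α)) {k y : ℝ}
    (hk : 0 < k) (hy : 0 < y) : y ^ α * tail P A (k * y) = k ^ (-α) * ℓ (k * y) := by
  rw [htail _ (mul_pos hk hy), Real.mul_rpow hk.le hy.le, Real.rpow_neg hy.le]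
  field_simp [(Real.rpow_pos_of_pos hy α).ne']

theorem nonneg_of_tail (htail : ∀ x, 0 < x → tail P A x = ℓ x * x ^ (-α)) {s : ℝ}
    (hs : 0 < s) : 0 ≤ ℓ s := by
  rw [eq_rpow_mul_tail htail hs]
  exact mul_nonneg (Real.rpow_nonneg hs.le α) (tail_nonneg s)

theorem eventually_pos_of_tail (hℓ : SlowlyVarying ℓ)
    (htail : ∀ x, 0 < x → tail P A x = ℓ x * x ^ (-α)) : ∀ᶠ x in atTop, 0 < ℓ x := by
  filter_upwards [hℓ.eventually_ne_zero, eventually_gt_atTop 0] with x h0 hx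
  exact (nonneg_of_tail htail hx).lt_of_ne' h0

theorem le_rpow_mul_of_tail [IsFiniteMeasure P]
    (htail : ∀ x, 0 < x → tail P A x = ℓ x * x ^ (-α)) (hα : 0 ≤ α) {c y s : ℝ}
    (hy : 0 < y) (hys : y ≤ s) (hsc : s ≤ c * y) : ℓ s ≤ c ^ α * ℓ y := by
  have hc : 0 ≤ c := nonneg_of_mul_nonneg_left (hy.le.trans (hys.trans hsc)) hy
  rw [eq_rpow_mul_tail htail (hy.trans_le hys), eq_rpow_mul_tail htail hy, ← mul_assoc,
    ← Real.mul_rpow hc hy.le]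
  exact mul_le_mul (Real.rpow_le_rpow (hy.le.trans hys) hsc hα) (tail_antitone hys)
    (tail_nonneg s) (Real.rpow_nonneg (by positivity) α)

theorem bddAbove_image_Ioc_of_tail [IsProbabilityMeasure P]
    (htail : ∀ x, 0 < x → tail P A x = ℓ x * x ^ (-α)) (hα : 0 ≤ α) (x : ℝ) :
    BddAbove (ℓ '' Ioc 0 x) := by
  refine ⟨x ^ α, ?_⟩
  rintro _ ⟨s, hs, rfl⟩
  rw [eq_rpow_mul_tail htail hs.1]
  calc s ^ α * tail P A s ≤ s ^ α * 1 :=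
        mul_le_mul_of_nonneg_left measureReal_le_one (Real.rpow_nonneg hs.1.le α)
    _ ≤ x ^ α := by rw [mul_one]; exact Real.rpow_le_rpow hs.1.le hs.2 hα

theorem tail_le_runningSup_mul [IsProbabilityMeasure P]
    (htail : ∀ x, 0 < x → tail P A x = ℓ x * x ^ (-α)) (hα : 0 ≤ α) {x s : ℝ}
    (hs : s ∈ Ioc 0 x) : tail P A s ≤ runningSup ℓ x * s ^ (-α) := by
  rw [htail s hs.1]
  exact mul_le_mul_of_nonneg_right (le_runningSup (bddAbove_image_Ioc_of_tail htail hα x) hs)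
    (Real.rpow_nonneg hs.1.le _)

theorem integrable_truncMoment [IsFiniteMeasure P] (hA : Measurable A) (hA0 : ∀ ω, 0 ≤ A ω)
    {p : ℝ} (hp : 0 ≤ p) (x : ℝ) :
    Integrable (fun ω => if A ω ≤ x then A ω ^ p else 0) P := by
  refine Integrable.mono' (integrable_const (|x| ^ p))
    ((Measurable.ite (measurableSet_le hA measurable_const) (hA.pow_const p)
      measurable_const).aestronglyMeasurable) (ae_of_all _ fun ω => ?_)
  split_ifs with h
  · rw [Real.norm_eq_abs, abs_of_nonneg (Real.rpow_nonneg (hA0 ω) p)]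
    exact Real.rpow_le_rpow (hA0 ω) (h.trans (le_abs_self x)) hp
  · simpa using Real.rpow_nonneg (abs_nonneg x) p

theorem truncMoment_nonneg (hA0 : ∀ ω, 0 ≤ A ω) (p x : ℝ) : 0 ≤ truncMoment P A p x :=
  integral_nonneg fun ω => by
    dsimp only
    split_ifs
    exacts [Real.rpow_nonneg (hA0 ω) p, le_rfl]

theorem truncMoment_mono [IsFiniteMeasure P] (hA : Measurable A) (hA0 : ∀ ω, 0 ≤ A ω)
    {p : ℝ} (hp : 0 ≤ p) : Monotone (truncMoment P A p) := by
  intro a b hab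
  refine integral_mono (integrable_truncMoment hA hA0 hp a)
    (integrable_truncMoment hA hA0 hp b) fun ω => ?_
  dsimp only
  split_ifs with ha hb
  · exact le_rfl
  · exact absurd (ha.trans hab) hb
  · exact Real.rpow_nonneg (hA0 ω) p
  · exact le_rfl

theorem integrable_indicator_tail [IsFiniteMeasure P] (hA : Measurable A) (c x : ℝ) :
    Integrable ({ω | x ≤ A ω}.indicator fun _ => c) P :=
  (integrable_const c).indicator (measurableSet_le measurable_const hA)

theorem truncMoment_le_add [IsFiniteMeasure P] (hA : Measurable A) (hA0 : ∀ ω, 0 ≤ A ω)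
    {p : ℝ} (hp : 0 ≤ p) {x y : ℝ} (hx : 0 ≤ x) (hxy : x ≤ y) :
    truncMoment P A p y ≤ truncMoment P A p x + y ^ p * tail P A x := by
  have hyp : 0 ≤ y ^ p := Real.rpow_nonneg (hx.trans hxy) p
  rw [← integral_indicator_tail hA, truncMoment, truncMoment,
    ← integral_add (integrable_truncMoment hA hA0 hp x) (integrable_indicator_tail hA _ x)]
  refine integral_mono (integrable_truncMoment hA hA0 hp y)
    ((integrable_truncMoment hA hA0 hp x).add (integrable_indicator_tail hA _ x)) fun ω => ?_
  by_cases h1 : A ω ≤ x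
  · simp [h1, h1.trans hxy, indicator_nonneg (fun _ _ => hyp)]
  · have h1' : x ≤ A ω := le_of_not_ge h1
    simp only [h1, if_false, indicator_of_mem (show ω ∈ {ω | x ≤ A ω} from h1'), zero_add]
    split_ifs with h2
    · exact Real.rpow_le_rpow (hA0 ω) h2 hp
    · exact hyp

theorem rpow_mul_tail_sub_le_truncMoment_sub [IsFiniteMeasure P] (hA : Measurable A)
    (hA0 : ∀ ω, 0 ≤ A ω) {p : ℝ} (hp : 0 ≤ p) {a b : ℝ} (ha : 0 < a) (hab : a ≤ b) :
    a ^ p * (tail P A (2 * a) - tail P A b) ≤ truncMoment P A p b - truncMoment P A p a := by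
  have hap : 0 ≤ a ^ p := Real.rpow_nonneg ha.le p
  suffices a ^ p * tail P A (2 * a) + truncMoment P A p a ≤
      truncMoment P A p b + a ^ p * tail P A b by linarith
  rw [← integral_indicator_tail hA, ← integral_indicator_tail hA, truncMoment, truncMoment,
    ← integral_add (integrable_indicator_tail hA _ _) (integrable_truncMoment hA hA0 hp a),
    ← integral_add (integrable_truncMoment hA hA0 hp b) (integrable_indicator_tail hA _ _)]
  refine integral_mono
    ((integrable_indicator_tail hA _ _).add (integrable_truncMoment hA hA0 hp a))
    ((integrable_truncMoment hA hA0 hp b).add (integrable_indicator_tail hA _ _)) fun ω => ?_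
  have hAp : 0 ≤ A ω ^ p := Real.rpow_nonneg (hA0 ω) p
  simp only [indicator, mem_ofPred_eq]
  rcases le_or_gt (A ω) a with h1 | h1
  · have h2 : ¬ 2 * a ≤ A ω := by linarith
    simp only [h2, h1, h1.trans hab, if_true, if_false]
    split_ifs <;> linarith
  · have h1' : ¬ A ω ≤ a := not_le.2 h1
    have haA : a ^ p ≤ A ω ^ p := Real.rpow_le_rpow ha.le h1.le hp
    simp only [h1', if_false]
    split_ifs <;> linarith

theorem tendsto_rpow_mul_tail_sub_div (hℓ : SlowlyVarying ℓ)
    (htail : ∀ x, 0 < x → tail P A x = ℓ x * x ^ (-α)) {c : ℝ} (hc : 0 < c) :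
    Tendsto (fun x => (c * x) ^ α * (tail P A (2 * (c * x)) - tail P A (4 * (c * x))) / ℓ x)
      atTop (𝓝 (2 ^ (-α) - 4 ^ (-α))) := by
  have h := ((hℓ (2 * c) (by positivity)).const_mul (2 ^ (-α))).sub
    ((hℓ (4 * c) (by positivity)).const_mul (4 ^ (-α)))
  rw [mul_one, mul_one] at h
  refine h.congr' ?_
  filter_upwards [eventually_gt_atTop 0] with x hx
  rw [mul_sub, rpow_mul_tail_mul htail two_pos (by positivity),
    rpow_mul_tail_mul htail four_pos (by positivity), sub_div, mul_div_assoc, mul_div_assoc,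
    mul_assoc, mul_assoc]

theorem sum_rpow_mul_tail_sub_le_truncMoment [IsFiniteMeasure P] (hA : Measurable A)
    (hA0 : ∀ ω, 0 ≤ A ω) {p : ℝ} (hp : 0 ≤ p) {x : ℝ} (hx : 0 < x) (m : ℕ) :
    ∑ i ∈ Finset.range m, ((4 : ℝ)⁻¹ ^ (i + 1) * x) ^ p *
      (tail P A (2 * ((4 : ℝ)⁻¹ ^ (i + 1) * x)) - tail P A (4 * ((4 : ℝ)⁻¹ ^ (i + 1) * x))) ≤
      truncMoment P A p x := by
  have hgrid : ∀ i : ℕ, 4 * ((4 : ℝ)⁻¹ ^ (i + 1) * x) = (4 : ℝ)⁻¹ ^ i * x := fun i => by ring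
  calc _ ≤ ∑ i ∈ Finset.range m, (truncMoment P A p ((4 : ℝ)⁻¹ ^ i * x) -
        truncMoment P A p ((4 : ℝ)⁻¹ ^ (i + 1) * x)) := by
        refine Finset.sum_le_sum fun i _ => ?_
        rw [← hgrid i]
        exact rpow_mul_tail_sub_le_truncMoment_sub hA hA0 hp (by positivity)
          (by linarith [show 0 < (4 : ℝ)⁻¹ ^ (i + 1) * x by positivity])
    _ ≤ truncMoment P A p x := by
        rw [Finset.sum_range_sub', pow_zero, one_mul]
        exact sub_le_self _ (truncMoment_nonneg hA0 _ _)

theorem isLittleO_truncMoment [IsFiniteMeasure P] (hA : Measurable A) (hA0 : ∀ ω, 0 ≤ A ω)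
    (hℓ : SlowlyVarying ℓ) (htail : ∀ x, 0 < x → tail P A x = ℓ x * x ^ (-α)) (hα : 0 < α) :
    ℓ =o[atTop] truncMoment P A α := by
  set κ : ℝ := 2 ^ (-α) - 4 ^ (-α)
  have hκ : 0 < κ := sub_pos.2 (Real.rpow_lt_rpow_of_neg two_pos (by norm_num) (by linarith))
  refine isLittleO_iff.2 fun c hc => ?_
  obtain ⟨m, hm⟩ := exists_nat_gt (2 / (c * κ))
  have hm0 : (0 : ℝ) < m := lt_trans (by positivity) hm
  have hcm : 1 ≤ c * (m * κ / 2) := by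
    rw [div_lt_iff₀ (by positivity)] at hm
    linarith
  have hsum := tendsto_finsetSum (Finset.range m) fun i _ =>
    tendsto_rpow_mul_tail_sub_div hℓ htail (c := (4 : ℝ)⁻¹ ^ (i + 1)) (by positivity)
  simp only [← Finset.sum_div, Finset.sum_const, Finset.card_range, nsmul_eq_mul] at hsum
  filter_upwards [hsum.eventually_const_lt (show m * κ / 2 < m * κ by linarith [mul_pos hm0 hκ]),
    eventually_pos_of_tail hℓ htail, eventually_gt_atTop 0] with x hsumx hℓx hx
  rw [Real.norm_of_nonneg hℓx.le, Real.norm_of_nonneg (truncMoment_nonneg (P := P) hA0 _ _)]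
  have hlow := ((lt_div_iff₀ hℓx).1 hsumx).le.trans
    (sum_rpow_mul_tail_sub_le_truncMoment (P := P) hA hA0 hα.le hx m)
  nlinarith

theorem truncMoment_le_one_add_mul [IsFiniteMeasure P] (hA : Measurable A)
    (hA0 : ∀ ω, 0 ≤ A ω) (hℓ : SlowlyVarying ℓ)
    (htail : ∀ x, 0 < x → tail P A x = ℓ x * x ^ (-α)) (hα : 0 < α)
    {t : ℝ} (ht : 1 ≤ t) {ε : ℝ} (hε : 0 < ε) :
    ∀ᶠ x in atTop, truncMoment P A α (t * x) ≤ (1 + ε) * truncMoment P A α x := by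
  have htα : 0 < t ^ α := Real.rpow_pos_of_pos (by linarith) α
  filter_upwards [(isLittleO_truncMoment (P := P) hA hA0 hℓ htail hα).bound (div_pos hε htα),
    eventually_gt_atTop 0] with x hx hx0
  rw [Real.norm_of_nonneg (nonneg_of_tail htail hx0),
    Real.norm_of_nonneg (truncMoment_nonneg (P := P) hA0 _ _)] at hx
  have h := truncMoment_le_add (P := P) hA hA0 hα.le hx0.le (le_mul_of_one_le_left hx0.le ht)
  rw [Real.mul_rpow (by linarith) hx0.le, mul_assoc, ← eq_rpow_mul_tail htail hx0] at h
  calc truncMoment P A α (t * x) ≤ truncMoment P A α x + t ^ α * ℓ x := h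
    _ ≤ truncMoment P A α x + t ^ α * (ε / t ^ α * truncMoment P A α x) := by gcongr
    _ = (1 + ε) * truncMoment P A α x := by field_simp

theorem truncMoment_le_one_add [IsProbabilityMeasure P] (hA : Measurable A)
    (hA0 : ∀ ω, 0 ≤ A ω) {p q : ℝ} (hp : 0 ≤ p) (hpq : p ≤ q) (x : ℝ) :
    truncMoment P A p x ≤ 1 + truncMoment P A q x := by
  have hq := integrable_truncMoment (P := P) hA hA0 (hp.trans hpq) x
  calc truncMoment P A p x ≤ ∫ ω, (1 + if A ω ≤ x then A ω ^ q else 0) ∂P := by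
        refine integral_mono (integrable_truncMoment hA hA0 hp x) ((integrable_const 1).add hq)
          fun ω => ?_
        dsimp only
        split_ifs
        · have hAq := Real.rpow_nonneg (hA0 ω) q
          rcases le_total (A ω) 1 with h | h
          · linarith [Real.rpow_le_one (hA0 ω) h hp]
          · linarith [Real.rpow_le_rpow_of_exponent_le h hpq]
        · norm_num
    _ = 1 + truncMoment P A q x := by
        rw [integral_add (integrable_const 1) hq, integral_const, probReal_univ, one_smul]
        rfl

theorem truncMoment_le_runningSup_mul [IsProbabilityMeasure P] (hA : Measurable A)
    (hA0 : ∀ ω, 0 ≤ A ω) (htail : ∀ x, 0 < x → tail P A x = ℓ x * x ^ (-α)) (hα : 0 < α)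
    {p : ℝ} (hαp : α < p) {x : ℝ} (hx : 0 ≤ x) :
    truncMoment P A p x ≤ runningSup ℓ x * (p / (p - α)) * x ^ (p - α) := by
  have hp : 0 < p := hα.trans hαp
  have hexp : -1 < -α / p := by rw [neg_div, neg_lt_neg_iff, div_lt_one hp]; exact hαp
  set f : Ω → ℝ := fun ω => if A ω ≤ x then A ω ^ p else 0
  have hf0 : 0 ≤ᵐ[P] f := ae_of_all _ fun ω => by
    simp only [f]; split_ifs
    exacts [Real.rpow_nonneg (hA0 ω) p, le_rfl]
  have hfx : f ≤ᵐ[P] fun _ => x ^ p := ae_of_all _ fun ω => by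
    simp only [f]; split_ifs with h
    exacts [Real.rpow_le_rpow (hA0 ω) h hp.le, Real.rpow_nonneg hx p]
  have hlevel : ∀ t ∈ Ioc 0 (x ^ p), P.real {ω | t ≤ f ω} ≤ runningSup ℓ x * t ^ (-α / p) := by
    intro t ht
    have hroot : ∀ y : ℝ, 0 ≤ y → (y ^ p) ^ p⁻¹ = y := fun y hy => by
      rw [← Real.rpow_mul hy, mul_inv_cancel₀ hp.ne', Real.rpow_one]
    have hs : t ^ p⁻¹ ∈ Ioc 0 x := ⟨Real.rpow_pos_of_pos ht.1 _,
      (Real.rpow_le_rpow ht.1.le ht.2 (inv_nonneg.2 hp.le)).trans_eq (hroot x hx)⟩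
    have hsub : {ω | t ≤ f ω} ⊆ {ω | t ^ p⁻¹ ≤ A ω} := by
      intro ω hω
      simp only [mem_ofPred_eq, f] at hω ⊢
      split_ifs at hω
      · exact (Real.rpow_le_rpow ht.1.le hω (inv_nonneg.2 hp.le)).trans_eq (hroot _ (hA0 ω))
      · exact absurd hω (not_le.2 ht.1)
    calc P.real {ω | t ≤ f ω} ≤ tail P A (t ^ p⁻¹) := measureReal_mono hsub
      _ ≤ runningSup ℓ x * (t ^ p⁻¹) ^ (-α) := tail_le_runningSup_mul htail hα.le hs
      _ = runningSup ℓ x * t ^ (-α / p) := by rw [← Real.rpow_mul ht.1.le]; ring_nf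
  have hint : ∫ t in Ioc 0 (x ^ p), t ^ (-α / p) = p / (p - α) * x ^ (p - α) := by
    rw [← intervalIntegral.integral_of_le (by positivity), integral_rpow (Or.inl hexp),
      Real.zero_rpow (by linarith), ← Real.rpow_mul hx]
    field_simp
    ring_nf
  calc truncMoment P A p x = ∫ t in Ioc 0 (x ^ p), P.real {ω | t ≤ f ω} :=
        (integrable_truncMoment hA hA0 hp.le x).integral_eq_integral_Ioc_meas_le hf0 hfx
    _ ≤ ∫ t in Ioc 0 (x ^ p), runningSup ℓ x * t ^ (-α / p) :=
        integral_mono_of_nonneg (ae_of_all _ fun _ => measureReal_nonneg)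
          ((intervalIntegral.intervalIntegrable_rpow' hexp).1.const_mul _)
          ((ae_restrict_iff' measurableSet_Ioc).2 (ae_of_all _ hlevel))
    _ = runningSup ℓ x * (p / (p - α)) * x ^ (p - α) := by
        rw [integral_const_mul, hint, mul_assoc]

end HeavyTail

/-- **A uniform bound for truncated moments of heavy-tailed variables.** Let `A ≥ 0` be a
random variable with `P(A ≥ x) = ℓ(x) x^{-α}` for all `x > 0`, where `ℓ` is slowly varying
and `α > 0`. Then there is a slowly varying function `L₀` such that for every positive
integer `k` and every `x ≥ 0`:
`E[A^k 1_{A ≤ x}] ≤ L₀(x)` if `k ≤ α`, and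
`E[A^k 1_{A ≤ x}] ≤ L₀(x) (k/(k-α)) x^{k-α}` if `k > α`. -/
theorem truncated_moments_heavy_tailed
    {Ω : Type*} [MeasurableSpace Ω] (P : Measure Ω) [IsProbabilityMeasure P]
    (α : ℝ) (hα : 0 < α)
    (A : Ω → ℝ) (hmeas : Measurable A) (hnonneg : ∀ ω, 0 ≤ A ω)
    (ℓ : ℝ → ℝ) (hℓ : SlowlyVarying ℓ)
    (htail : ∀ x : ℝ, 0 < x → (P {ω | x ≤ A ω}).toReal = ℓ x * x ^ (-α)) :
    ∃ L₀ : ℝ → ℝ, SlowlyVarying L₀ ∧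
      ∀ k : ℕ, 1 ≤ k → ∀ x : ℝ, 0 ≤ x →
        (((k : ℝ) ≤ α →
            ∫ ω, (if A ω ≤ x then A ω ^ k else 0) ∂P ≤ L₀ x) ∧
         (α < (k : ℝ) →
            ∫ ω, (if A ω ≤ x then A ω ^ k else 0) ∂P ≤
              L₀ x * ((k : ℝ) / ((k : ℝ) - α)) * x ^ ((k : ℝ) - α))) := by
  have htail' : ∀ x, 0 < x → tail P A x = ℓ x * x ^ (-α) := htail
  have hℓ0 : ∀ s, 0 < s → 0 ≤ ℓ s := fun _ => nonneg_of_tail htail'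
  have hbdd := bddAbove_image_Ioc_of_tail htail' hα.le
  have hG0 := runningSup_nonneg hℓ0
  have hM0 := truncMoment_nonneg (P := P) hnonneg α
  have hmoment (k : ℕ) (x : ℝ) :
      ∫ ω, (if A ω ≤ x then A ω ^ k else 0) ∂P = truncMoment P A k x := by
    simp only [truncMoment, Real.rpow_natCast]
  refine ⟨fun x => runningSup ℓ x + truncMoment P A α x + 1, ?_,
    fun k _ x hx => ⟨fun hkα => ?_, fun hαk => ?_⟩⟩
  · refine SlowlyVarying.of_monotone
      (((runningSup_mono hbdd hℓ0).add (truncMoment_mono hmeas hnonneg hα.le)).add_const 1)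
      (Eventually.of_forall fun x => by linarith [hG0 x, hM0 x]) fun t ht ε hε => ?_
    filter_upwards [runningSup_le_one_add_mul hℓ (eventually_pos_of_tail hℓ htail') hbdd hα
        (fun _ _ _ => le_rpow_mul_of_tail htail' hα.le) t hε,
      truncMoment_le_one_add_mul hmeas hnonneg hℓ htail' hα ht hε] with x hG hM
    linarith
  · rw [hmoment]
    linarith [truncMoment_le_one_add (P := P) hmeas hnonneg k.cast_nonneg hkα x, hG0 x]
  · rw [hmoment]
    have hratio : 0 ≤ (k : ℝ) / (k - α) := div_nonneg k.cast_nonneg (by linarith)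
    refine (truncMoment_le_runningSup_mul hmeas hnonneg htail' hα hαk hx).trans ?_
    gcongr
    linarith [hM0 x]

end
end
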